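/- Quantitative Dirichlet density theorem: there is a constant C > 0 such that for every integer n ≥ 2, |(1/n²)·#{(i,j) ∈ ℕ_n² : gcd(i,j) = 1} − 6/π²| ≤ C·(log n)/n. -/

import Mathlib

/-!
Möbius inversion over the common divisors gives
`#{(i, j) ∈ ℕ_n² : gcd(i, j) = 1} = ∑_{d ≤ n} μ(d) ⌊n/d⌋²`. Replacing `⌊n/d⌋²/n²` by `1/d²` costs
at most `2/(dn)` per term, hence `O(log n / n)` in total by the harmonic bound, and completing
`∑_{d ≤ n} μ(d)/d²` to `∑_d μ(d)/d² = 1/ζ(2) = 6/π²` costs at most `∑_{d > n} 1/d² ≤ 1/n`.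
-/

open Filter Finset

open Topology ArithmeticFunction ArithmeticFunction.Moebius

theorem sum_divisors_moebius (m : ℕ) :
    ∑ d ∈ m.divisors, μ d = if m = 1 then 1 else 0 := by
  simpa only [coe_mul_zeta_apply, one_apply] using congrArg (· m) moebius_mul_coe_zeta

theorem filter_Icc_dvd_and_dvd_eq_divisors_gcd {a b n : ℕ} (ha : a ∈ Icc 1 n) :
    {d ∈ Icc 1 n | d ∣ a ∧ d ∣ b} = (a.gcd b).divisors := by
  rw [mem_Icc] at ha
  ext d
  simp only [mem_filter, mem_Icc, Nat.mem_divisors, Nat.dvd_gcd_iff, ne_eq,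
    Nat.gcd_eq_zero_iff, not_and_or]
  constructor
  · rintro ⟨-, hd⟩
    exact ⟨hd, .inl (by omega)⟩
  · rintro ⟨hd, -⟩
    have hle := Nat.le_of_dvd (by omega) hd.1
    have hpos := Nat.pos_of_dvd_of_pos hd.1 (by omega)
    exact ⟨⟨by omega, by omega⟩, hd⟩

theorem card_filter_gcd_eq_one_eq_sum_moebius (n : ℕ) :
    (#{p ∈ Icc 1 n ×ˢ Icc 1 n | p.1.gcd p.2 = 1} : ℤ) = ∑ d ∈ Icc 1 n, μ d * (n / d : ℕ) ^ 2 := by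
  have hind (p : ℕ × ℕ) (hp : p ∈ Icc 1 n ×ˢ Icc 1 n) :
      (if p.1.gcd p.2 = 1 then 1 else 0 : ℤ) = ∑ d ∈ Icc 1 n, if d ∣ p.1 ∧ d ∣ p.2 then μ d else 0 := by
    rw [← sum_filter, filter_Icc_dvd_and_dvd_eq_divisors_gcd (mem_product.mp hp).1,
      sum_divisors_moebius]
  have hcount (d : ℕ) : #{p ∈ Icc 1 n ×ˢ Icc 1 n | d ∣ p.1 ∧ d ∣ p.2} = (n / d) ^ 2 := by
    rw [filter_product (d ∣ ·) (d ∣ ·), card_product, sq,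
      show Icc 1 n = Ioc 0 n from Icc_add_one_left_eq_Ioc 0 n, Nat.Ioc_filter_dvd_card_eq_div]
  rw [natCast_card_filter, sum_congr rfl hind, sum_comm]
  refine sum_congr rfl fun d _ => ?_
  rw [← sum_filter, sum_const, hcount, nsmul_eq_mul, mul_comm]
  push_cast
  rfl

theorem abs_moebius_div_sq_le (d : ℕ) : |(μ d : ℝ) / d ^ 2| ≤ ((d : ℝ) ^ 2)⁻¹ := by
  rw [abs_div, abs_of_nonneg (by positivity : (0 : ℝ) ≤ d ^ 2), div_eq_mul_inv]
  exact mul_le_of_le_one_left (by positivity) (mod_cast abs_moebius_le_one)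

theorem tsum_moebius_div_sq : ∑' d : ℕ, (μ d : ℝ) / d ^ 2 = 6 / Real.pi ^ 2 := by
  have hterm (d : ℕ) : LSeries.term (fun d ↦ (μ d : ℂ)) 2 d = ((μ d : ℝ) / d ^ 2 : ℝ) := by
    rcases eq_or_ne d 0 with rfl | hd
    · simp
    · rw [LSeries.term_of_ne_zero hd, show (2 : ℂ) = (2 : ℕ) by norm_num, Complex.cpow_natCast]
      push_cast; rfl
  have hL : LSeries (fun d ↦ (μ d : ℂ)) 2 = ((∑' d : ℕ, (μ d : ℝ) / d ^ 2 : ℝ) : ℂ) := by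
    rw [LSeries, Complex.ofReal_tsum]
    exact tsum_congr hterm
  have h2 : (1 : ℝ) < (2 : ℂ).re := by norm_num
  have hζμ := LSeries_zeta_mul_Lseries_moebius h2
  rw [LSeries_zeta_eq_riemannZeta h2, riemannZeta_two, hL] at hζμ
  have hreal : Real.pi ^ 2 / 6 * ∑' d : ℕ, (μ d : ℝ) / d ^ 2 = 1 := by exact_mod_cast hζμ
  field_simp at hreal ⊢
  linarith

theorem abs_tsum_sub_sum_Icc_le_inv {f : ℕ → ℝ} (hf : ∀ d, |f d| ≤ ((d : ℝ) ^ 2)⁻¹)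
    {n : ℕ} (hn : n ≠ 0) : |∑' d, f d - ∑ d ∈ Icc 1 n, f d| ≤ (n : ℝ)⁻¹ := by
  have hIcc (k : ℕ) : Icc 1 k = Ioc 0 k := Icc_add_one_left_eq_Ioc 0 k
  -- `((0 : ℝ) ^ 2)⁻¹ = 0`, so the bound at `d = 0` forces `f 0 = 0`.
  have hf0 : f 0 = 0 := abs_nonpos_iff.mp (by simpa using hf 0)
  have hsum : Summable f := .of_norm_bounded (Real.summable_nat_pow_inv.mpr one_lt_two) hf
  have hlim : Tendsto (fun m ↦ ∑ d ∈ Icc 1 m, f d) atTop (𝓝 (∑' d, f d)) := by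
    refine (hsum.hasSum.tendsto_sum_nat.comp (tendsto_add_atTop_nat 1)).congr fun m ↦ ?_
    rw [Function.comp_apply, Nat.range_succ_eq_Icc_zero, Icc_eq_cons_Ioc m.zero_le, sum_cons, hf0,
      zero_add, hIcc]
  refine le_of_tendsto (hlim.sub_const _).abs (eventually_atTop.mpr ⟨n, fun m hm ↦ ?_⟩)
  rw [hIcc, hIcc, ← sum_Ioc_consecutive f n.zero_le hm, add_sub_cancel_left]
  calc |∑ d ∈ Ioc n m, f d| ≤ ∑ d ∈ Ioc n m, ((d : ℝ) ^ 2)⁻¹ :=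
        (abs_sum_le_sum_abs _ _).trans (sum_le_sum fun d _ ↦ hf d)
    _ ≤ (n : ℝ)⁻¹ - (m : ℝ)⁻¹ := sum_Ioc_inv_sq_le_sub hn hm
    _ ≤ (n : ℝ)⁻¹ := sub_le_self _ (by positivity)

theorem abs_natFloor_sq_sub_sq_le {x : ℝ} (hx : 0 ≤ x) : |(⌊x⌋₊ : ℝ) ^ 2 - x ^ 2| ≤ 2 * x := by
  have h₁ := Nat.floor_le hx
  have h₂ := Nat.lt_floor_add_one x
  rw [abs_sub_comm, abs_of_nonneg (by nlinarith)]
  nlinarith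

theorem abs_div_sq_div_sq_sub_inv_sq_le {n : ℕ} (hn : n ≠ 0) (d : ℕ) :
    |((n / d : ℕ) : ℝ) ^ 2 / n ^ 2 - ((d : ℝ) ^ 2)⁻¹| ≤ 2 / (d * n) := by
  rcases eq_or_ne d 0 with rfl | hd
  · simp
  have hx : (0 : ℝ) ≤ n / d := by positivity
  have hrescale : ((n / d : ℕ) : ℝ) ^ 2 / n ^ 2 - ((d : ℝ) ^ 2)⁻¹ =
      ((n / d : ℕ) ^ 2 - (n / d : ℝ) ^ 2) / n ^ 2 := by
    field_simp
  calc |((n / d : ℕ) : ℝ) ^ 2 / n ^ 2 - ((d : ℝ) ^ 2)⁻¹|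
      = |(⌊(n / d : ℝ)⌋₊ : ℝ) ^ 2 - (n / d : ℝ) ^ 2| / n ^ 2 := by
        rw [Nat.floor_div_eq_div, hrescale, abs_div, abs_of_pos (by positivity : (0 : ℝ) < n ^ 2)]
    _ ≤ 2 * (n / d) / n ^ 2 := by gcongr; exact abs_natFloor_sq_sub_sq_le hx
    _ = 2 / (d * n) := by field_simp

theorem abs_card_coprime_div_sq_sub_le {n : ℕ} (hn : n ≠ 0) :
    |(#{p ∈ Icc 1 n ×ˢ Icc 1 n | p.1.gcd p.2 = 1} : ℝ) / n ^ 2 - 6 / Real.pi ^ 2| ≤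
      2 / n * ∑ d ∈ Icc 1 n, (d : ℝ)⁻¹ + (n : ℝ)⁻¹ := by
  have hcard : (#{p ∈ Icc 1 n ×ˢ Icc 1 n | p.1.gcd p.2 = 1} : ℝ) =
      ∑ d ∈ Icc 1 n, (μ d : ℝ) * ((n / d : ℕ) : ℝ) ^ 2 := by
    rw [← Int.cast_natCast, card_filter_gcd_eq_one_eq_sum_moebius]
    push_cast
    rfl
  have hsplit : (#{p ∈ Icc 1 n ×ˢ Icc 1 n | p.1.gcd p.2 = 1} : ℝ) / n ^ 2 - 6 / Real.pi ^ 2 =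
      ∑ d ∈ Icc 1 n, (μ d : ℝ) * (((n / d : ℕ) : ℝ) ^ 2 / n ^ 2 - ((d : ℝ) ^ 2)⁻¹) -
        (∑' d : ℕ, (μ d : ℝ) / d ^ 2 - ∑ d ∈ Icc 1 n, (μ d : ℝ) / d ^ 2) := by
    rw [hcard, tsum_moebius_div_sq, sum_div]
    simp only [mul_sub, sum_sub_distrib, mul_div_assoc, ← div_eq_mul_inv]
    ring
  have hmain : |∑ d ∈ Icc 1 n, (μ d : ℝ) * (((n / d : ℕ) : ℝ) ^ 2 / n ^ 2 - ((d : ℝ) ^ 2)⁻¹)| ≤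
      2 / n * ∑ d ∈ Icc 1 n, (d : ℝ)⁻¹ := by
    rw [mul_sum]
    refine (abs_sum_le_sum_abs _ _).trans (sum_le_sum fun d _ ↦ ?_)
    rw [abs_mul]
    calc |(μ d : ℝ)| * |((n / d : ℕ) : ℝ) ^ 2 / n ^ 2 - ((d : ℝ) ^ 2)⁻¹|
        ≤ 1 * (2 / (d * n)) := by
          gcongr
          · exact_mod_cast abs_moebius_le_one
          · exact abs_div_sq_div_sq_sub_inv_sq_le hn d
      _ = 2 / n * (d : ℝ)⁻¹ := by ring
  rw [hsplit]
  exact (abs_sub _ _).trans (add_le_add hmain (abs_tsum_sub_sum_Icc_le_inv abs_moebius_div_sq_le hn))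

/-- **Quantitative Dirichlet density theorem**: there is a constant `C > 0` such that
for every `n ≥ 2`, the proportion of coprime pairs in `{1,…,n}²` differs from `6/π²`
by at most `C · (log n)/n`. -/
theorem dirichlet_density_quantitative :
    ∃ C : ℝ, 0 < C ∧ ∀ n : ℕ, 2 ≤ n →
      |(((Finset.Icc 1 n ×ˢ Finset.Icc 1 n).filter
            fun p : ℕ × ℕ => Nat.gcd p.1 p.2 = 1).card : ℝ) / (n : ℝ) ^ 2
          - 6 / Real.pi ^ 2| ≤ C * Real.log n / n := by
  refine ⟨8, by norm_num, fun n hn ↦ ?_⟩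
  have hharmonic : ∑ d ∈ Icc 1 n, (d : ℝ)⁻¹ ≤ 1 + Real.log n := by
    have h := harmonic_le_one_add_log n
    rw [harmonic_eq_sum_Icc] at h
    push_cast at h
    exact h
  have hlog : 1 / 2 ≤ Real.log n :=
    calc (1 / 2 : ℝ) ≤ Real.log 2 := by linarith [Real.log_two_gt_d9]
      _ ≤ Real.log n := Real.log_le_log (by norm_num) (mod_cast hn)
  calc _ ≤ 2 / n * ∑ d ∈ Icc 1 n, (d : ℝ)⁻¹ + (n : ℝ)⁻¹ := abs_card_coprime_div_sq_sub_le (by omega)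
    _ ≤ 2 / n * (1 + Real.log n) + (n : ℝ)⁻¹ := by gcongr
    _ = (3 + 2 * Real.log n) / n := by field_simp; ring
    _ ≤ 8 * Real.log n / n := by gcongr; linarith
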